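/- Let S be a hereditarily closed set of pregames. If for every position G ∈ S, every pair (G^L, G^R) consisting of a left option and a right option of G satisfies the F1 property or the F2 property, then for every position G ∈ S, every such pair satisfies the F1 property. -/

import Mathlib

universe u

namespace SetTheory

/-- Pregames, as in the older Mathlib (`SetTheory.PGame`, removed since). -/
inductive PGame : Type (u + 1)
  | mk : ∀ α β : Type u, (α → PGame) → (β → PGame) → PGame

namespace PGame

/-- The indexing type for allowable moves by Left. -/
def LeftMoves : PGame → Type u
  | mk l _ _ _ => l

/-- The indexing type for allowable moves by Right. -/
def RightMoves : PGame → Type u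
  | mk _ r _ _ => r

/-- The new game after Left makes an allowed move. -/
def moveLeft : ∀ g : PGame, LeftMoves g → PGame
  | mk _l _ L _ => L

/-- The new game after Right makes an allowed move. -/
def moveRight : ∀ g : PGame, RightMoves g → PGame
  | mk _ _r _ R => R

/-- The pair (`≤`, `⧏`) defined simultaneously, as in the older Mathlib. -/
noncomputable def leLF (x : PGame.{u}) : PGame.{u} → Prop × Prop :=
  PGame.rec (motive := fun _ => PGame.{u} → Prop × Prop)
    (fun xl xr xL xR ihL ihR y =>
      PGame.rec (motive := fun _ => Prop × Prop)
        (fun yl yr yL yR jhL jhR =>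
          ((∀ i, (ihL i (mk yl yr yL yR)).2) ∧ ∀ j, (jhR j).2,
            (∃ i, (jhL i).1) ∨ ∃ j, (ihR j (mk yl yr yL yR)).1)) y) x

instance : LE PGame :=
  ⟨fun x y => (leLF x y).1⟩

end PGame

end SetTheory

open SetTheory PGame

namespace SetTheory

namespace PGame

/-- The less or fuzzy relation. -/
def LF (x y : PGame.{u}) : Prop := (leLF x y).2

infix:50 " ⧏ " => PGame.LF

theorem moveRecOn {C : PGame.{u} → Prop} (x : PGame.{u})
    (IH : ∀ y : PGame.{u}, (∀ i, C (y.moveLeft i)) → (∀ j, C (y.moveRight j)) → C y) : C x :=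
  PGame.recOn x (fun yl yr yL yR ihL ihR => IH (mk yl yr yL yR) ihL ihR)

theorem le_iff_forall_lf {x y : PGame.{u}} :
    x ≤ y ↔ (∀ i, x.moveLeft i ⧏ y) ∧ ∀ j, x ⧏ y.moveRight j := by
  cases x; cases y; exact Iff.rfl

theorem lf_iff_exists_le {x y : PGame.{u}} :
    x ⧏ y ↔ (∃ i, x ≤ y.moveLeft i) ∨ ∃ j, x.moveRight j ≤ y := by
  cases x; cases y; exact Iff.rfl

theorem le_refl' (x : PGame.{u}) : x ≤ x := by
  induction x using moveRecOn with
  | IH x IHl IHr =>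
    exact le_iff_forall_lf.2 ⟨fun i => lf_iff_exists_le.2 (Or.inl ⟨i, IHl i⟩),
      fun j => lf_iff_exists_le.2 (Or.inr ⟨j, IHr j⟩)⟩

theorem moveLeft_lf {x : PGame.{u}} (i : x.LeftMoves) : x.moveLeft i ⧏ x :=
  lf_iff_exists_le.2 (Or.inl ⟨i, le_refl' _⟩)

theorem lf_moveRight {x : PGame.{u}} (j : x.RightMoves) : x ⧏ x.moveRight j :=
  lf_iff_exists_le.2 (Or.inr ⟨j, le_refl' _⟩)

theorem le_trans_aux : ∀ x y z : PGame.{u}, (x ≤ y → y ≤ z → x ≤ z) ∧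
    (x ⧏ y → y ≤ z → x ⧏ z) ∧ (x ≤ y → y ⧏ z → x ⧏ z) := by
  intro x
  induction x using moveRecOn with
  | IH x IHxl IHxr =>
  intro y
  induction y using moveRecOn with
  | IH y IHyl IHyr =>
  intro z
  induction z using moveRecOn with
  | IH z IHzl IHzr =>
  refine ⟨fun hxy hyz => ?_, fun hxy hyz => ?_, fun hxy hyz => ?_⟩
  · exact le_iff_forall_lf.2 ⟨fun i => (IHxl i y z).2.1 ((le_iff_forall_lf.1 hxy).1 i) hyz,
      fun j => (IHzr j).2.2 hxy ((le_iff_forall_lf.1 hyz).2 j)⟩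
  · rcases lf_iff_exists_le.1 hxy with ⟨i, h⟩ | ⟨j, h⟩
    · exact (IHyl i z).2.2 h ((le_iff_forall_lf.1 hyz).1 i)
    · exact lf_iff_exists_le.2 (Or.inr ⟨j, (IHxr j y z).1 h hyz⟩)
  · rcases lf_iff_exists_le.1 hyz with ⟨i, h⟩ | ⟨j, h⟩
    · exact lf_iff_exists_le.2 (Or.inl ⟨i, (IHzl i).1 hxy h⟩)
    · exact (IHyr j z).2.1 ((le_iff_forall_lf.1 hxy).2 j) h

theorem lf_of_le_of_lf {x y z : PGame.{u}} (h1 : x ≤ y) (h2 : y ⧏ z) : x ⧏ z :=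
  (le_trans_aux x y z).2.2 h1 h2

theorem lf_of_lf_of_le {x y z : PGame.{u}} (h1 : x ⧏ y) (h2 : y ≤ z) : x ⧏ z :=
  (le_trans_aux x y z).2.1 h1 h2

end PGame

end SetTheory

/-- A set of pregames is hereditarily closed (HCR) if it is closed under taking
left and right options. -/
def HCR (S : Set PGame) : Prop :=
  ∀ G ∈ S, (∀ i, G.moveLeft i ∈ S) ∧ ∀ j, G.moveRight j ∈ S

/-- The pair `(xL, xR)` satisfies the F1 property if some left option of `xR` is `≥ xL`,
or some right option of `xL` is `≤ xR`. -/
def F1 (xL xR : PGame) : Prop :=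
  (∃ i, xL ≤ xR.moveLeft i) ∨ ∃ j, xL.moveRight j ≤ xR

/-- The pair `(xL, xR)` satisfies the F2 property if some right option of `xL` is `≤`
some left option of `xR`. -/
def F2 (xL xR : PGame) : Prop :=
  ∃ (j : xL.RightMoves) (i : xR.LeftMoves), xL.moveRight j ≤ xR.moveLeft i

/-- Key lemma: under the hypotheses, every `G ∈ S` satisfies `Gᴸ ≤ G ≤ Gᴿ` for all
its options. This is proved by Conway induction. -/
theorem key_13 (S : Set PGame) (hS : HCR S)
    (h : ∀ G ∈ S, ∀ (i : G.LeftMoves) (j : G.RightMoves),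
      F1 (G.moveLeft i) (G.moveRight j) ∨ F2 (G.moveLeft i) (G.moveRight j)) :
    ∀ G, G ∈ S → (∀ i, G.moveLeft i ≤ G) ∧ ∀ j, G ≤ G.moveRight j := by
  intro G
  induction G using PGame.moveRecOn with
  | IH G IHL IHR =>
    intro hG
    have key : ∀ (i : G.LeftMoves) (j : G.RightMoves), G.moveLeft i ⧏ G.moveRight j := by
      intro i j
      rcases h G hG i j with hF1 | ⟨j', i', hle⟩
      · exact lf_iff_exists_le.2 hF1
      · -- Gᴸ ⧏ Gᴸᴿ ≤ Gᴿᴸ ≤ Gᴿ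
        have h1 : G.moveLeft i ⧏ (G.moveLeft i).moveRight j' := lf_moveRight j'
        have h2 : (G.moveRight j).moveLeft i' ≤ G.moveRight j :=
          (IHR j ((hS G hG).2 j)).1 i'
        exact lf_of_lf_of_le h1 ((le_trans_aux _ _ _).1 hle h2)
    constructor
    · intro i
      rw [le_iff_forall_lf]
      constructor
      · intro k
        exact lf_of_le_of_lf ((IHL i ((hS G hG).1 i)).1 k) (moveLeft_lf i)
      · intro j
        exact key i j
    · intro j
      rw [le_iff_forall_lf]
      constructor
      · intro i
        exact key i j
      · intro k
        exact lf_of_lf_of_le (lf_moveRight j) ((IHR j ((hS G hG).2 j)).2 k)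

theorem stmt_13 (S : Set PGame) (hS : HCR S)
    (h : ∀ G ∈ S, ∀ (i : G.LeftMoves) (j : G.RightMoves),
      F1 (G.moveLeft i) (G.moveRight j) ∨ F2 (G.moveLeft i) (G.moveRight j)) :
    ∀ G ∈ S, ∀ (i : G.LeftMoves) (j : G.RightMoves),
      F1 (G.moveLeft i) (G.moveRight j) := by
  intro G hG i j
  have hk := key_13 S hS h G hG
  exact lf_iff_exists_le.1 (lf_of_le_of_lf (hk.1 i) (lf_moveRight j))
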